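/- One-time pad privacy-leakage bound: let G be a finite abelian group and let S, S' be G-valued random variables and X, W', F', Z' random variables with finite ranges, such that S is uniformly distributed on G and independent of (X, Z', W', S', F'). Then I(X; (W', S' + S, Z') | F') ≤ I(X; (W', Z') | F'), where + denotes the group operation in G. -/

import Mathlib

open scoped Classical
open Real

noncomputable section

namespace PA

/-- A probability mass function on a finite type, represented as a real-valued function. -/
def IsPMF {Ω : Type*} [Fintype Ω] (p : Ω → ℝ) : Prop :=
  (∀ ω, 0 ≤ p ω) ∧ (∑ ω, p ω) = 1

/-- Probability of an event under the pmf `p`. -/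
def probOf {Ω : Type*} [Fintype Ω] (p : Ω → ℝ) (E : Ω → Prop) : ℝ :=
  ∑ ω, if E ω then p ω else 0

/-- Shannon entropy (in bits, i.e. base-2 logarithm) of the random variable `X`
under the pmf `p`. -/
def ent {Ω α : Type*} [Fintype Ω] [Fintype α] (p : Ω → ℝ) (X : Ω → α) : ℝ :=
  (∑ a : α, Real.negMulLog (probOf p (fun ω => X ω = a))) / Real.log 2

/-- Conditional Shannon entropy `H(X | Z)` (in bits). -/
def condEnt {Ω α β : Type*} [Fintype Ω] [Fintype α] [Fintype β]
    (p : Ω → ℝ) (X : Ω → α) (Z : Ω → β) : ℝ :=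
  ent p (fun ω => (X ω, Z ω)) - ent p Z

/-- Mutual information `I(X;Y)` (in bits). -/
def mutInf {Ω α β : Type*} [Fintype Ω] [Fintype α] [Fintype β]
    (p : Ω → ℝ) (X : Ω → α) (Y : Ω → β) : ℝ :=
  ent p X + ent p Y - ent p (fun ω => (X ω, Y ω))

/-- Conditional mutual information `I(X;Y|Z)` (in bits). -/
def condMutInf {Ω α β γ : Type*} [Fintype Ω] [Fintype α] [Fintype β] [Fintype γ]
    (p : Ω → ℝ) (X : Ω → α) (Y : Ω → β) (Z : Ω → γ) : ℝ :=
  ent p (fun ω => (X ω, Z ω)) + ent p (fun ω => (Y ω, Z ω))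
    - ent p (fun ω => (X ω, Y ω, Z ω)) - ent p Z

/-- `X` and `Y` are conditionally independent given `M`, i.e. `X − M − Y` forms a
Markov chain. -/
def CondIndep {Ω α β γ : Type*} [Fintype Ω]
    (p : Ω → ℝ) (X : Ω → α) (M : Ω → β) (Y : Ω → γ) : Prop :=
  ∀ x m y,
    probOf p (fun ω => X ω = x ∧ M ω = m ∧ Y ω = y) * probOf p (fun ω => M ω = m)
      = probOf p (fun ω => X ω = x ∧ M ω = m) * probOf p (fun ω => M ω = m ∧ Y ω = y)

end PA

/-! Since the key `S` is uniform and independent of everything else, `S' + S` is uniform given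
every value of `(X, W', Z', F')`. Appending it to `(W', Z', F')` or to `(X, W', Z', F')` therefore
adds exactly `log₂ |G|` bits, and these two contributions cancel in the conditional mutual
information, which is in fact unchanged. -/

namespace PA

variable {Ω : Type*} [Fintype Ω] (p : Ω → ℝ)

lemma probOf_congr {E E' : Ω → Prop} (h : ∀ ω, E ω ↔ E' ω) :
    probOf p E = probOf p E' :=
  Finset.sum_congr rfl fun ω _ => by simp only [h ω]

lemma probOf_eq_sum_probOf_and_eq {T : Type*} [Fintype T] (Y : Ω → T) (E : Ω → Prop) :
    probOf p E = ∑ t, probOf p (fun ω => E ω ∧ Y ω = t) := by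
  unfold probOf
  rw [Finset.sum_comm]
  refine Finset.sum_congr rfl fun ω _ => ?_
  by_cases h : E ω <;> simp [h]

lemma sum_probOf_eq_one (hp : IsPMF p) {T : Type*} [Fintype T] (Y : Ω → T) :
    ∑ t, probOf p (fun ω => Y ω = t) = 1 := by
  unfold probOf
  rw [Finset.sum_comm]
  simpa using hp.2

lemma ent_comp_of_injective {α β : Type*} [Fintype α] [Fintype β] (e : α → β)
    (he : Function.Injective e) (Y : Ω → α) :
    ent p (fun ω => e (Y ω)) = ent p Y := by
  unfold ent
  congr 1
  refine (Fintype.sum_of_injective e he _ _ (fun b hb => ?_) fun a => ?_).symm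
  · rw [probOf_congr p (E' := fun _ => False) fun ω => iff_false_intro fun h => hb ⟨Y ω, h⟩]
    simp [probOf]
  · exact congrArg _ (probOf_congr p fun ω => he.eq_iff.symm)

lemma ent_prod_of_uniform {α β : Type*} [Fintype α] [Fintype β] [Nonempty β]
    (hp : IsPMF p) (V : Ω → α) (K : Ω → β)
    (hK : ∀ v k, probOf p (fun ω => V ω = v ∧ K ω = k)
      = probOf p (fun ω => V ω = v) / Fintype.card β) :
    ent p (fun ω => (V ω, K ω)) = ent p V + Real.logb 2 (Fintype.card β) := by
  have hn : (Fintype.card β : ℝ) ≠ 0 := by exact_mod_cast Fintype.card_ne_zero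
  have fiber : ∀ v, ∑ k : β, negMulLog (probOf p fun ω => (V ω, K ω) = (v, k))
      = negMulLog (probOf p fun ω => V ω = v)
        + probOf p (fun ω => V ω = v) * Real.log (Fintype.card β) := by
    intro v
    have hpair : ∀ k, probOf p (fun ω => (V ω, K ω) = (v, k))
        = probOf p (fun ω => V ω = v) / Fintype.card β :=
      fun k => (probOf_congr p fun ω => Prod.mk_inj).trans (hK v k)
    simp only [hpair, Finset.sum_const, Finset.card_univ, nsmul_eq_mul]
    rw [div_eq_mul_inv, negMulLog_mul]
    simp only [negMulLog, Real.log_inv]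
    field_simp
  unfold ent
  rw [Fintype.sum_prod_type]
  simp only [fiber]
  rw [Finset.sum_add_distrib, ← Finset.sum_mul, sum_probOf_eq_one p hp, one_mul, add_div]
  rfl

section OneTimePad

variable {G T : Type*} [AddCommGroup G] [Fintype G] [Fintype T]
  (S : Ω → G) (Y : Ω → T)

lemma probOf_and_add_eq_div (hUnif : ∀ g : G, probOf p (fun ω => S ω = g) = 1 / Fintype.card G)
    (hInd : ∀ g t, probOf p (fun ω => S ω = g ∧ Y ω = t)
      = probOf p (fun ω => S ω = g) * probOf p (fun ω => Y ω = t))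
    {α : Type*} (f : T → α) (g : T → G) (v : α) (k : G) :
    probOf p (fun ω => f (Y ω) = v ∧ g (Y ω) + S ω = k)
      = probOf p (fun ω => f (Y ω) = v) / Fintype.card G := by
  rw [probOf_eq_sum_probOf_and_eq p Y, probOf_eq_sum_probOf_and_eq p Y, Finset.sum_div]
  refine Finset.sum_congr rfl fun t _ => ?_
  by_cases hv : f t = v
  · calc probOf p (fun ω => (f (Y ω) = v ∧ g (Y ω) + S ω = k) ∧ Y ω = t)
        = probOf p (fun ω => S ω = k - g t ∧ Y ω = t) := probOf_congr p fun ω => by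
          constructor
          · rintro ⟨⟨-, hk⟩, rfl⟩
            exact ⟨eq_sub_of_add_eq' hk, rfl⟩
          · rintro ⟨hS, rfl⟩
            exact ⟨⟨hv, by rw [hS, add_sub_cancel]⟩, rfl⟩
      _ = probOf p (fun ω => Y ω = t) / Fintype.card G := by rw [hInd, hUnif]; ring
      _ = probOf p (fun ω => f (Y ω) = v ∧ Y ω = t) / Fintype.card G := by
          congr 1
          exact probOf_congr p fun ω => ⟨fun h => ⟨h ▸ hv, h⟩, And.right⟩
  · have vanish : ∀ E : Ω → Prop, (∀ ω, E ω → f (Y ω) = v) →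
        probOf p (fun ω => E ω ∧ Y ω = t) = 0 := by
      intro E hE
      rw [probOf_congr p (E' := fun _ => False) fun ω =>
        iff_false_intro fun ⟨hω, ht⟩ => hv (ht ▸ hE ω hω)]
      simp [probOf]
    rw [vanish _ fun _ h => h.1, vanish _ fun _ h => h, zero_div]

lemma ent_prod_add_uniform (hp : IsPMF p)
    (hUnif : ∀ g : G, probOf p (fun ω => S ω = g) = 1 / Fintype.card G)
    (hInd : ∀ g t, probOf p (fun ω => S ω = g ∧ Y ω = t)
      = probOf p (fun ω => S ω = g) * probOf p (fun ω => Y ω = t))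
    {α : Type*} [Fintype α] (f : T → α) (g : T → G) :
    ent p (fun ω => (f (Y ω), g (Y ω) + S ω))
      = ent p (fun ω => f (Y ω)) + Real.logb 2 (Fintype.card G) :=
  ent_prod_of_uniform p hp _ _ (probOf_and_add_eq_div p S Y hUnif hInd f g)

end OneTimePad

end PA

open PA

/-- One-time pad privacy-leakage bound. -/
theorem one_time_pad_privacy_leakage_bound
    {Ω G XT WT FT ZT : Type*} [Fintype Ω] [Fintype G] [AddCommGroup G]
    [Fintype XT] [Fintype WT] [Fintype FT] [Fintype ZT]
    (p : Ω → ℝ) (hp : IsPMF p)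
    (S S' : Ω → G) (X : Ω → XT) (W' : Ω → WT) (F' : Ω → FT) (Z' : Ω → ZT)
    (hUnif : ∀ g : G, probOf p (fun ω => S ω = g) = 1 / (Fintype.card G : ℝ))
    (hInd : ∀ (g : G) (t : XT × ZT × WT × G × FT),
      probOf p (fun ω => S ω = g ∧ (X ω, Z' ω, W' ω, S' ω, F' ω) = t)
        = probOf p (fun ω => S ω = g)
          * probOf p (fun ω => (X ω, Z' ω, W' ω, S' ω, F' ω) = t)) :
    condMutInf p X (fun ω => (W' ω, S' ω + S ω, Z' ω)) F'
      ≤ condMutInf p X (fun ω => (W' ω, Z' ω)) F' := by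
  have : Nonempty G := ⟨0⟩
  let Y := fun ω => (X ω, Z' ω, W' ω, S' ω, F' ω)
  have hWZF : ent p (fun ω => ((W' ω, S' ω + S ω, Z' ω), F' ω))
      = ent p (fun ω => ((W' ω, Z' ω), F' ω)) + Real.logb 2 (Fintype.card G) := by
    rw [← ent_prod_add_uniform p S Y hp hUnif hInd
      (fun t => ((t.2.2.1, t.2.1), t.2.2.2.2)) (fun t => t.2.2.2.1)]
    exact ent_comp_of_injective p
      (fun u : ((WT × ZT) × FT) × G => ((u.1.1.1, u.2, u.1.1.2), u.1.2))
      (by rintro ⟨⟨⟨_, _⟩, _⟩, _⟩ ⟨⟨⟨_, _⟩, _⟩, _⟩ h; simp_all)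
      (fun ω => (((W' ω, Z' ω), F' ω), S' ω + S ω))
  have hXWZF : ent p (fun ω => (X ω, (W' ω, S' ω + S ω, Z' ω), F' ω))
      = ent p (fun ω => (X ω, (W' ω, Z' ω), F' ω)) + Real.logb 2 (Fintype.card G) := by
    rw [← ent_prod_add_uniform p S Y hp hUnif hInd
      (fun t => (t.1, (t.2.2.1, t.2.1), t.2.2.2.2)) (fun t => t.2.2.2.1)]
    exact ent_comp_of_injective p
      (fun u : (XT × (WT × ZT) × FT) × G => (u.1.1, (u.1.2.1.1, u.2, u.1.2.1.2), u.1.2.2))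
      (by rintro ⟨⟨_, ⟨_, _⟩, _⟩, _⟩ ⟨⟨_, ⟨_, _⟩, _⟩, _⟩ h; simp_all)
      (fun ω => ((X ω, (W' ω, Z' ω), F' ω), S' ω + S ω))
  unfold condMutInf
  linarith
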